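/- Let α, β ∈ C with |α|² + |β|² = 1/2. Then the 2×4 matrix M with columns (α, β)ᵀ, (α, −β)ᵀ, (β, α)ᵀ, (β, −α)ᵀ satisfies M M† = I_2, and the 4×4 matrix M̃ obtained by appending the two rows (β̄, β̄, −ᾱ, −ᾱ) and (−ᾱ, ᾱ, β̄, −β̄) is unitary. -/

import Mathlib

open Matrix

/-!
The rows of `M̃` are pairwise orthogonal and each has squared norm `2 (|α|² + |β|²)`, so
`M̃ M̃ᴴ = 1` under the normalisation; a one-sided inverse of a square matrix is two-sided.
`M` consists of the first two rows of `M̃`, so `M Mᴴ` is the upper-left block of `M̃ M̃ᴴ`.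
-/

namespace Matrix

variable {l m n : Type*}

theorem submatrix_rows_mul_conjTranspose {R : Type*} [Fintype n] [NonUnitalSemiring R]
    [StarRing R] (A : Matrix m n R) (f : l → m) :
    A.submatrix f id * (A.submatrix f id)ᴴ = (A * Aᴴ).submatrix f f := by
  rw [conjTranspose_submatrix, submatrix_mul _ _ _ _ _ Function.bijective_id]

theorem submatrix_rows_mul_conjTranspose_eq_one {R : Type*} [Fintype n] [CommRing R]
    [StarRing R] [DecidableEq l] [DecidableEq n] {A : Matrix n n R} (hA : A ∈ unitaryGroup n R)
    {f : l → n} (hf : Function.Injective f) :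
    A.submatrix f id * (A.submatrix f id)ᴴ = 1 := by
  rw [submatrix_rows_mul_conjTranspose, ← star_eq_conjTranspose,
    mem_unitaryGroup_iff.mp hA, submatrix_one _ hf]

end Matrix

def neumarkExtension (α β : ℂ) : Matrix (Fin 4) (Fin 4) ℂ :=
  !![α, α, β, β;
     β, -β, α, -α;
     (starRingEnd ℂ) β, (starRingEnd ℂ) β, -(starRingEnd ℂ) α, -(starRingEnd ℂ) α;
     -(starRingEnd ℂ) α, (starRingEnd ℂ) α, (starRingEnd ℂ) β, -(starRingEnd ℂ) β]

theorem neumarkExtension_mul_conjTranspose (α β : ℂ) :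
    neumarkExtension α β * (neumarkExtension α β)ᴴ =
      ((2 * (Complex.normSq α + Complex.normSq β) : ℝ) : ℂ) • 1 := by
  ext i j
  fin_cases i <;> fin_cases j <;>
    simp [neumarkExtension, mul_apply, Fin.sum_univ_four, one_apply, mul_comm,
      ← Complex.mul_conj] <;> ring

theorem neumarkExtension_mem_unitaryGroup {α β : ℂ} (h : ‖α‖ ^ 2 + ‖β‖ ^ 2 = 1 / 2) :
    neumarkExtension α β ∈ unitaryGroup (Fin 4) ℂ := by
  rw [mem_unitaryGroup_iff, star_eq_conjTranspose, neumarkExtension_mul_conjTranspose,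
    ← Complex.sq_norm, ← Complex.sq_norm, h]
  norm_num

/-- Neumark extension of the `ℤ₂×ℤ₂`-covariant qubit POVM: for `|α|² + |β|² = 1/2` the
matrix `M` with columns `(α,β)ᵀ, (α,-β)ᵀ, (β,α)ᵀ, (β,-α)ᵀ` satisfies `M Mᴴ = 1`, and
appending the rows `(β̄, β̄, -ᾱ, -ᾱ)` and `(-ᾱ, ᾱ, β̄, -β̄)` yields a unitary `M̃`. -/
theorem stmt_19 (α β : ℂ) (h : ‖α‖ ^ 2 + ‖β‖ ^ 2 = 1 / 2)
    (M : Matrix (Fin 2) (Fin 4) ℂ)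
    (hM : M = !![α, α, β, β; β, -β, α, -α])
    (Mt : Matrix (Fin 4) (Fin 4) ℂ)
    (hMt : Mt = !![α, α, β, β;
                   β, -β, α, -α;
                   (starRingEnd ℂ) β, (starRingEnd ℂ) β, -(starRingEnd ℂ) α, -(starRingEnd ℂ) α;
                   -(starRingEnd ℂ) α, (starRingEnd ℂ) α, (starRingEnd ℂ) β, -(starRingEnd ℂ) β]) :
    M * Mᴴ = 1 ∧ Mt ∈ Matrix.unitaryGroup (Fin 4) ℂ := by
  have hunitary : Mt ∈ unitaryGroup (Fin 4) ℂ := hMt ▸ neumarkExtension_mem_unitaryGroup h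
  have hM_rows : M = Mt.submatrix (Fin.castLE (by norm_num)) id := by
    subst hM hMt
    ext i j
    fin_cases i <;> fin_cases j <;> rfl
  rw [hM_rows]
  exact ⟨submatrix_rows_mul_conjTranspose_eq_one hunitary (Fin.castLE_injective _), hunitary⟩
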